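/- Conformal mapping property of the cone map ψ. Fix γ ∈ (0, 1/4], ω ∈ [−πγ/2, πγ/2], z ∈ ℂ with Im z > 0, and 0 < ξ < Im z. For u in the closed upper half-plane let u^γ := exp(γ·log u), where log is the branch of the complex logarithm that is holomorphic on ℂ ∖ (−i·[0, ∞)) and real on the positive real axis (with u^γ := 0 at u = 0), and define ψ(u) := z + e^{iω}·(−iξ + e^{iπ(1−γ)/2}·u^γ). Then: ψ is continuous on the closed upper half-plane and holomorphic and injective on the open upper half-plane ℍ; ψ(i·ξ^{1/γ}) = z; and ψ(ℍ) equals the interior of the translated cone {−i·e^{iω}·ξ} + V_z, where V_z := {ζ ∈ ℂ : Im(e^{−iω}(ζ − z)) ≥ cos(πγ/2)·|ζ − z|} and the sum is a Minkowski translate. -/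

import Mathlib

open Complex

/-- The branch of the complex logarithm which is holomorphic on `ℂ ∖ (−i·[0,∞))`
(branch cut along the nonpositive imaginary axis) and real on the positive real axis. -/
noncomputable def branchLog (u : ℂ) : ℂ :=
  Complex.log (-Complex.I * u) + (Real.pi / 2 : ℝ) * Complex.I

/-- The associated power `u^γ := exp(γ·log u)`, with `0^γ := 0`. -/
noncomputable def branchPow (γ : ℝ) (u : ℂ) : ℂ :=
  if u = 0 then 0 else Complex.exp ((γ : ℂ) * branchLog u)

/-- The cone map `ψ(u) := z + e^{iω}(−iξ + e^{iπ(1−γ)/2}·u^γ)`. -/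
noncomputable def coneMap (γ ω : ℝ) (z : ℂ) (ξ : ℝ) (u : ℂ) : ℂ :=
  z + Complex.exp (Complex.I * (ω : ℂ)) *
    (-Complex.I * (ξ : ℂ) +
      Complex.exp (Complex.I * ((Real.pi * (1 - γ) / 2 : ℝ) : ℂ)) * branchPow γ u)

/-- The half-cone with vertex `z`, aperture angle `γπ` and tilt angle `ω`. -/
def coneSet (γ ω : ℝ) (z : ℂ) : Set ℂ :=
  {ζ : ℂ | Real.cos (Real.pi * γ / 2) * ‖ζ - z‖
      ≤ (Complex.exp (-Complex.I * (ω : ℂ)) * (ζ - z)).im}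

/-! ### Auxiliary lemmas -/

lemma branchLog_eq {u : ℂ} (hu : u ≠ 0) (him : 0 ≤ u.im) :
    branchLog u = Complex.log u := by
  have h1 : Complex.log (-Complex.I * u) = Complex.log (-Complex.I) + Complex.log u := by
    apply Complex.log_mul (by simp) hu
    rw [Complex.arg_neg_I]
    constructor
    · have := Complex.arg_nonneg_iff.mpr him
      nlinarith [Real.pi_pos]
    · have := Complex.arg_le_pi u
      nlinarith [Real.pi_pos]
  rw [branchLog, h1, Complex.log_neg_I]
  push_cast
  ring

lemma branchPow_eq {γ : ℝ} {u : ℂ} (hu : u ≠ 0) (him : 0 ≤ u.im) :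
    branchPow γ u = Complex.exp ((γ : ℂ) * Complex.log u) := by
  rw [branchPow, if_neg hu, branchLog_eq hu him]

lemma neg_I_mul_mem_slitPlane {u : ℂ} (hu : u ≠ 0) (him : 0 ≤ u.im) :
    -Complex.I * u ∈ Complex.slitPlane := by
  rw [Complex.mem_slitPlane_iff]
  simp only [neg_mul, neg_re, neg_im, Complex.mul_re, Complex.mul_im,
    Complex.I_re, Complex.I_im]
  rcases lt_or_eq_of_le him with h | h
  · left; simpa using h
  · right
    intro hre
    exact hu (Complex.ext (by simpa using hre) h.symm)

lemma branchLog_re (u : ℂ) : (branchLog u).re = Real.log (‖u‖) := by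
  simp [branchLog, Complex.log_re, map_mul]

lemma branchPow_norm {γ : ℝ} (hγ : γ ≠ 0) (u : ℂ) :
    ‖branchPow γ u‖ = ‖u‖ ^ γ := by
  rw [branchPow]
  split_ifs with h
  · simp [Real.zero_rpow hγ, h]
  · rw [Complex.norm_exp]
    have h1 : ((γ : ℂ) * branchLog u).re = γ * Real.log (‖u‖) := by
      rw [Complex.re_ofReal_mul, branchLog_re]
    rw [h1, Real.rpow_def_of_pos (norm_pos_iff.mpr h) γ, mul_comm]

lemma branchPow_continuousOn {γ : ℝ} (hγ : 0 < γ) :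
    ContinuousOn (branchPow γ) {u : ℂ | 0 ≤ u.im} := by
  intro u hu
  rcases eq_or_ne u 0 with rfl | hu0
  · -- continuity at 0 via squeeze
    have key : Filter.Tendsto (branchPow γ) (nhds 0) (nhds 0) := by
      have h2 : Filter.Tendsto (fun u : ℂ => ‖u‖ ^ γ) (nhds 0)
          (nhds ((0:ℝ) ^ γ)) := by
        have := (Real.continuousAt_rpow_const 0 γ (Or.inr hγ.le)).tendsto.comp
          (by simpa using (continuous_norm (E := ℂ)).tendsto 0)
        exact this
      refine squeeze_zero_norm (fun t => ?_) (by simpa [Real.zero_rpow hγ.ne'] using h2)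
      rw [branchPow_norm hγ.ne' t]
    have h0 : branchPow γ 0 = 0 := by simp [branchPow]
    have hc : ContinuousAt (branchPow γ) 0 := by
      unfold ContinuousAt
      rw [h0]; exact key
    exact hc.continuousWithinAt
  · -- continuity at u ≠ 0
    have hca : ContinuousAt (fun t => Complex.exp ((γ : ℂ) * branchLog t)) u := by
      apply Complex.continuous_exp.continuousAt.comp
      apply (continuousAt_const.mul _)
      apply ContinuousAt.add _ continuousAt_const
      exact (continuousAt_clog (neg_I_mul_mem_slitPlane hu0 hu)).comp
        (continuous_const.mul continuous_id).continuousAt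
    have heq : ∀ᶠ t in nhds u, Complex.exp ((γ : ℂ) * branchLog t) = branchPow γ t := by
      filter_upwards [isOpen_ne.mem_nhds hu0] with t ht
      rw [branchPow, if_neg ht]
    exact (hca.congr heq).continuousWithinAt

lemma branchPow_differentiableAt {γ : ℝ} {u : ℂ} (him : 0 < u.im) :
    DifferentiableAt ℂ (branchPow γ) u := by
  have hu0 : u ≠ 0 := by intro h; rw [h] at him; simp at him
  have hd : DifferentiableAt ℂ (fun t => Complex.exp ((γ : ℂ) * branchLog t)) u := by
    apply DifferentiableAt.cexp
    apply DifferentiableAt.const_mul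
    apply DifferentiableAt.add_const
    exact DifferentiableAt.clog ((differentiableAt_id.const_mul _))
      (neg_I_mul_mem_slitPlane hu0 him.le)
  apply hd.congr_of_eventuallyEq
  filter_upwards [isOpen_ne.mem_nhds hu0] with t ht
  rw [branchPow, if_neg ht]

lemma arg_mem_Ioo' {u : ℂ} (him : 0 < u.im) : 0 < u.arg ∧ u.arg < Real.pi := by
  constructor
  · rcases lt_or_eq_of_le (Complex.arg_nonneg_iff.mpr him.le) with h | h
    · exact h
    · exact absurd (Complex.arg_eq_zero_iff.mp h.symm).2 him.ne'
  · exact Complex.arg_lt_pi_iff.mpr (Or.inr him.ne')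

lemma sin_gt_aux' {γ a : ℝ} (hγ : 0 < γ) (hγ4 : γ ≤ 1/4) (ha0 : 0 < a) (haπ : a < Real.pi) :
    Real.cos (Real.pi * γ / 2) < Real.sin (Real.pi * (1 - γ) / 2 + γ * a) := by
  have hπ := Real.pi_pos
  have key : Real.pi * (1 - γ) / 2 + γ * a = Real.pi / 2 + γ * (a - Real.pi / 2) := by ring
  rw [key]
  have hsin : Real.sin (Real.pi / 2 + γ * (a - Real.pi / 2))
      = Real.cos (γ * (a - Real.pi / 2)) := by
    rw [Real.sin_add, Real.sin_pi_div_two, Real.cos_pi_div_two]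
    ring
  rw [hsin, ← Real.cos_abs (γ * (a - Real.pi / 2))]
  apply Real.cos_lt_cos_of_nonneg_of_le_pi (abs_nonneg _) (by nlinarith)
  have : |a - Real.pi / 2| < Real.pi / 2 := by
    rw [abs_lt]; constructor <;> nlinarith
  calc |γ * (a - Real.pi / 2)| = γ * |a - Real.pi / 2| := by
        rw [abs_mul, abs_of_pos hγ]
    _ < γ * (Real.pi / 2) := by exact (mul_lt_mul_iff_right₀ hγ).mpr this
    _ = Real.pi * γ / 2 := by ring

lemma angle_lt_aux {γ β : ℝ} (hγ : 0 < γ) (hγ4 : γ ≤ 1/4) (hβl : -Real.pi < β)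
    (hβu : β ≤ Real.pi) (h : Real.cos (Real.pi * γ / 2) < Real.sin β) :
    |β - Real.pi / 2| < Real.pi * γ / 2 := by
  have hπ := Real.pi_pos
  have hθpos : 0 < Real.pi * γ / 2 := by positivity
  have hθlt : Real.pi * γ / 2 < Real.pi / 2 := by nlinarith
  have hcosθ : 0 < Real.cos (Real.pi * γ / 2) :=
    Real.cos_pos_of_mem_Ioo ⟨by nlinarith, hθlt⟩
  have hsinβ : 0 < Real.sin β := lt_trans hcosθ h
  have hβ0 : 0 < β := by
    by_contra hc
    push_neg at hc
    exact absurd (Real.sin_nonpos_of_nonpos_of_neg_pi_le hc hβl.le) (not_le.mpr hsinβ)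
  have hβπ : β < Real.pi := by
    rcases lt_or_eq_of_le hβu with h' | h'
    · exact h'
    · exfalso; rw [h', Real.sin_pi] at hsinβ; exact lt_irrefl 0 hsinβ
  have habs : |β - Real.pi / 2| ≤ Real.pi := by
    rw [abs_le]; constructor <;> nlinarith
  by_contra hc
  push_neg at hc
  have h1 : Real.cos |β - Real.pi / 2| ≤ Real.cos (Real.pi * γ / 2) :=
    Real.cos_le_cos_of_nonneg_of_le_pi hθpos.le habs hc
  rw [Real.cos_abs, Real.cos_sub_pi_div_two] at h1
  linarith

lemma expγlog_inj {γ : ℝ} (hγ : 0 < γ) (hγ4 : γ ≤ 1/4) {u v : ℂ}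
    (hu : 0 < u.im) (hv : 0 < v.im)
    (h : Complex.exp ((γ:ℂ) * Complex.log u) = Complex.exp ((γ:ℂ) * Complex.log v)) :
    u = v := by
  have hπ := Real.pi_pos
  obtain ⟨n, hn⟩ := Complex.exp_eq_exp_iff_exists_int.mp h
  have him : γ * u.arg = γ * v.arg + n * (2 * Real.pi) := by
    have := congrArg Complex.im hn
    simpa [Complex.im_ofReal_mul, Complex.log_im, Complex.add_im, Complex.mul_im] using this
  have hau := arg_mem_Ioo' hu
  have hav := arg_mem_Ioo' hv
  have hn0 : n = 0 := by
    have h1 : |γ * u.arg - γ * v.arg| < Real.pi := by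
      rw [abs_lt]; constructor <;> nlinarith
    have heq : (n:ℝ) * (2 * Real.pi) = γ * u.arg - γ * v.arg := by linarith
    have h2 : |(n:ℝ)| * (2 * Real.pi) < Real.pi := by
      have h3 : |(n:ℝ) * (2 * Real.pi)| < Real.pi := heq ▸ h1
      rwa [abs_mul, abs_of_pos (by positivity : (0:ℝ) < 2 * Real.pi)] at h3
    by_contra hc
    have h4 : (1:ℤ) ≤ |n| := Int.one_le_abs hc
    have h5 : (1:ℝ) ≤ |(n:ℝ)| := by
      rw [← Int.cast_abs]; exact_mod_cast h4
    nlinarith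
  rw [hn0] at hn
  simp only [Int.cast_zero, zero_mul, add_zero] at hn
  have hlog : Complex.log u = Complex.log v := by
    have hγ0 : (γ:ℂ) ≠ 0 := by exact_mod_cast hγ.ne'
    exact mul_left_cancel₀ hγ0 hn
  have hu0 : u ≠ 0 := fun h0 => by simp [h0] at hu
  have hv0 : v ≠ 0 := fun h0 => by simp [h0] at hv
  rw [← Complex.exp_log hu0, ← Complex.exp_log hv0, hlog]

lemma sector_forward {γ : ℝ} (hγ : 0 < γ) (hγ4 : γ ≤ 1/4) {u : ℂ} (him : 0 < u.im) :
    Real.cos (Real.pi * γ / 2) *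
      ‖Complex.exp (Complex.I * ((Real.pi * (1 - γ) / 2 : ℝ) : ℂ)) *
        Complex.exp ((γ:ℂ) * Complex.log u)‖
    < (Complex.exp (Complex.I * ((Real.pi * (1 - γ) / 2 : ℝ) : ℂ)) *
        Complex.exp ((γ:ℂ) * Complex.log u)).im := by
  have harg := arg_mem_Ioo' him
  set E : ℂ := Complex.I * ((Real.pi * (1 - γ) / 2 : ℝ) : ℂ) + (γ:ℂ) * Complex.log u with hE
  have hprod : Complex.exp (Complex.I * ((Real.pi * (1 - γ) / 2 : ℝ) : ℂ)) *
      Complex.exp ((γ:ℂ) * Complex.log u) = Complex.exp E := (Complex.exp_add _ _).symm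
  have hre : E.re = γ * (Complex.log u).re := by
    simp [hE, Complex.add_re, Complex.mul_re, Complex.re_ofReal_mul]
  have him' : E.im = Real.pi * (1 - γ) / 2 + γ * u.arg := by
    simp [hE, Complex.add_im, Complex.mul_im, Complex.im_ofReal_mul, Complex.log_im]
  rw [hprod, Complex.norm_exp, Complex.exp_im, hre, him']
  have hsin := sin_gt_aux' hγ hγ4 harg.1 harg.2
  have hpos : 0 < Real.exp (γ * (Complex.log u).re) := Real.exp_pos _
  nlinarith

lemma sector_backward {γ : ℝ} (hγ : 0 < γ) (hγ4 : γ ≤ 1/4) {s : ℂ}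
    (h : Real.cos (Real.pi * γ / 2) * ‖s‖ < s.im) :
    ∃ u : ℂ, 0 < u.im ∧
      Complex.exp (Complex.I * ((Real.pi * (1 - γ) / 2 : ℝ) : ℂ)) *
        Complex.exp ((γ:ℂ) * Complex.log u) = s := by
  have hπ := Real.pi_pos
  have hs0 : s ≠ 0 := by
    intro h0; rw [h0] at h; simp at h
  have habs : 0 < ‖s‖ := norm_pos_iff.mpr hs0
  have hsin : Real.cos (Real.pi * γ / 2) < Real.sin s.arg := by
    rw [Complex.sin_arg, lt_div_iff₀ habs]
    exact h
  have hβ : |s.arg - Real.pi / 2| < Real.pi * γ / 2 :=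
    angle_lt_aux hγ hγ4 (Complex.neg_pi_lt_arg s) (Complex.arg_le_pi s) hsin
  rw [abs_lt] at hβ
  set ψ : ℝ := s.arg - Real.pi * (1 - γ) / 2 with hψ
  have hψ0 : 0 < ψ := by rw [hψ]; nlinarith [hβ.1]
  have hψπ : ψ < Real.pi * γ := by rw [hψ]; nlinarith [hβ.2]
  set v : ℂ := ((Real.log (‖s‖) / γ : ℝ) : ℂ) + ((ψ / γ : ℝ) : ℂ) * Complex.I with hv
  have hvim : v.im = ψ / γ := by simp [hv]
  have hψγ0 : 0 < ψ / γ := div_pos hψ0 hγ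
  have hψγπ : ψ / γ < Real.pi := by
    rw [div_lt_iff₀ hγ]; nlinarith
  refine ⟨Complex.exp v, ?_, ?_⟩
  · rw [Complex.exp_im, hvim]
    exact mul_pos (Real.exp_pos _) (Real.sin_pos_of_pos_of_lt_pi hψγ0 hψγπ)
  · have hlog : Complex.log (Complex.exp v) = v :=
      Complex.log_exp (by rw [hvim]; linarith) (by rw [hvim]; linarith)
    rw [hlog]
    have hγv : (γ:ℂ) * v = ((Real.log (‖s‖) : ℝ) : ℂ) + ((ψ : ℝ) : ℂ) * Complex.I := by
      rw [hv]
      have hγ0 : (γ:ℂ) ≠ 0 := by exact_mod_cast hγ.ne'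
      field_simp
      rw [mul_add, ← mul_assoc, ← ofReal_mul, ← ofReal_mul, mul_div_cancel₀ _ hγ.ne',
        mul_div_cancel₀ _ hγ.ne']
      ring
    rw [hγv, ← Complex.exp_add]
    have hexp : Complex.I * ((Real.pi * (1 - γ) / 2 : ℝ) : ℂ) +
        (((Real.log (‖s‖) : ℝ) : ℂ) + ((ψ : ℝ) : ℂ) * Complex.I)
        = ((Real.log (‖s‖) : ℝ) : ℂ) + ((s.arg : ℝ) : ℂ) * Complex.I := by
      rw [hψ]
      push_cast
      ring
    rw [hexp, Complex.exp_add, ← Complex.ofReal_exp, Real.exp_log habs]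
    exact Complex.norm_mul_exp_arg_mul_I s

lemma interior_coneSet {γ : ℝ} (hγ : 0 < γ) (hγ4 : γ ≤ 1/4) (ω : ℝ) (z : ℂ) :
    interior (coneSet γ ω z) = {ζ : ℂ | Real.cos (Real.pi * γ / 2) * ‖ζ - z‖
      < (Complex.exp (-Complex.I * (ω : ℂ)) * (ζ - z)).im} := by
  have hπ := Real.pi_pos
  have hθpos : 0 < Real.pi * γ / 2 := by positivity
  have hK1 : Real.cos (Real.pi * γ / 2) < 1 := by
    have := Real.cos_lt_cos_of_nonneg_of_le_pi (le_refl 0) (by nlinarith) hθpos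
    simpa using this
  apply le_antisymm
  · -- interior ⊆ strict
    intro ζ hζ
    have hle0 : ζ ∈ coneSet γ ω z := interior_subset hζ
    have hle : Real.cos (Real.pi * γ / 2) * ‖ζ - z‖
        ≤ (Complex.exp (-Complex.I * (ω : ℂ)) * (ζ - z)).im := hle0
    rcases lt_or_eq_of_le hle with hlt | heq
    · exact hlt
    · exfalso
      obtain ⟨ε, hε, hball⟩ := Metric.isOpen_iff.mp isOpen_interior ζ hζ
      set t := ε / 2 with ht
      have htpos : 0 < t := by positivity
      set ζ' := ζ - Complex.I * (t : ℂ) * Complex.exp (Complex.I * (ω : ℂ)) with hζ'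
      have hdist : dist ζ' ζ < ε := by
        rw [Complex.dist_eq, hζ']
        have : ζ - Complex.I * (t:ℂ) * Complex.exp (Complex.I * (ω:ℂ)) - ζ
            = -(Complex.I * (t:ℂ) * Complex.exp (Complex.I * (ω:ℂ))) := by ring
        rw [this, norm_neg]
        rw [norm_mul, norm_mul, Complex.norm_exp, Complex.norm_I]
        simp only [Complex.mul_re, Complex.I_re, Complex.I_im, Complex.ofReal_re,
          Complex.ofReal_im]
        rw [Complex.norm_real, Real.norm_eq_abs, abs_of_pos htpos]
        simp
        linarith
      have hmem : ζ' ∈ coneSet γ ω z := interior_subset (hball hdist)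
      -- derive contradiction
      have hrot : Complex.exp (-Complex.I * (ω:ℂ)) * Complex.exp (Complex.I * (ω:ℂ)) = 1 := by
        rw [← Complex.exp_add]; ring_nf; exact Complex.exp_zero
      have h1 : Complex.exp (-Complex.I * (ω:ℂ)) * (ζ' - z)
          = Complex.exp (-Complex.I * (ω:ℂ)) * (ζ - z) - Complex.I * (t:ℂ) := by
        rw [hζ']
        have : ζ - Complex.I * (t:ℂ) * Complex.exp (Complex.I * (ω:ℂ)) - z
            = (ζ - z) - Complex.I * (t:ℂ) * Complex.exp (Complex.I * (ω:ℂ)) := by ring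
        rw [this, mul_sub]
        congr 1
        calc Complex.exp (-Complex.I * (ω:ℂ)) *
              (Complex.I * (t:ℂ) * Complex.exp (Complex.I * (ω:ℂ)))
            = Complex.I * (t:ℂ) *
              (Complex.exp (-Complex.I * (ω:ℂ)) * Complex.exp (Complex.I * (ω:ℂ))) := by ring
          _ = Complex.I * (t:ℂ) := by rw [hrot, mul_one]
      have him' : (Complex.exp (-Complex.I * (ω:ℂ)) * (ζ' - z)).im
          = (Complex.exp (-Complex.I * (ω:ℂ)) * (ζ - z)).im - t := by
        rw [h1, Complex.sub_im]
        congr 1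
        simp [Complex.mul_im]
      have habs' : ‖ζ - z‖ - t ≤ ‖ζ' - z‖ := by
        have h2 : ‖Complex.I * (t:ℂ) * Complex.exp (Complex.I * (ω:ℂ))‖ = t := by
          rw [norm_mul, norm_mul, Complex.norm_exp, Complex.norm_I, Complex.norm_real,
            Real.norm_eq_abs, abs_of_pos htpos]
          simp [Complex.mul_re]
        have h3 : ζ' - z = (ζ - z) - Complex.I * (t:ℂ) * Complex.exp (Complex.I * (ω:ℂ)) := by
          rw [hζ']; ring
        rw [h3]
        calc ‖ζ - z‖ - t
            = ‖ζ - z‖ -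
              ‖Complex.I * (t:ℂ) * Complex.exp (Complex.I * (ω:ℂ))‖ := by rw [h2]
          _ ≤ _ := by
              have := norm_sub_norm_le (ζ - z)
                (Complex.I * (t:ℂ) * Complex.exp (Complex.I * (ω:ℂ)))
              simpa using this
      have hKnn : 0 ≤ Real.cos (Real.pi * γ / 2) := by
        apply le_of_lt
        exact Real.cos_pos_of_mem_Ioo ⟨by nlinarith, by nlinarith⟩
      have hfinal : Real.cos (Real.pi * γ / 2) * ‖ζ' - z‖
          ≤ (Complex.exp (-Complex.I * (ω:ℂ)) * (ζ' - z)).im := hmem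
      rw [him', ← heq] at hfinal
      nlinarith [mul_le_mul_of_nonneg_left habs' hKnn]
  · -- strict ⊆ interior
    intro ζ hζ
    apply mem_interior_iff_mem_nhds.mpr
    have hopen : IsOpen {ζ : ℂ | Real.cos (Real.pi * γ / 2) * ‖ζ - z‖
        < (Complex.exp (-Complex.I * (ω : ℂ)) * (ζ - z)).im} := by
      apply isOpen_lt
      · exact (continuous_const.mul
          (continuous_norm.comp (continuous_id.sub continuous_const)))
      · exact Complex.continuous_im.comp (continuous_const.mul (continuous_id.sub continuous_const))
    apply Filter.mem_of_superset (hopen.mem_nhds hζ)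
    intro x hx
    show Real.cos (Real.pi * γ / 2) * ‖x - z‖
        ≤ (Complex.exp (-Complex.I * (ω : ℂ)) * (x - z)).im
    exact le_of_lt hx

lemma interior_translate (a : ℂ) (S : Set ℂ) :
    interior ((fun ζ : ℂ => a + ζ) '' S) = (fun ζ : ℂ => a + ζ) '' interior S := by
  have := (Homeomorph.addLeft a).image_interior S
  simpa using this.symm

/-- **Conformal mapping property of the cone map `ψ`.**
For `γ ∈ (0, 1/4]`, `|ω| ≤ πγ/2`, `z ∈ ℍ` and `0 < ξ < Im z`, the map `ψ` is
continuous on the closed upper half-plane, holomorphic and injective on `ℍ`, sends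
`i·ξ^{1/γ}` to `z`, and maps `ℍ` onto the interior of the translated cone
`{−i e^{iω} ξ} + V_z`. -/
theorem coneMap_conformal
    (γ ω : ℝ) (hγ : 0 < γ) (hγ4 : γ ≤ 1 / 4)
    (hω : |ω| ≤ Real.pi * γ / 2)
    (z : ℂ) (hz : 0 < z.im) (ξ : ℝ) (hξ : 0 < ξ) (hξz : ξ < z.im) :
    ContinuousOn (coneMap γ ω z ξ) {u : ℂ | 0 ≤ u.im} ∧
    (∀ u : ℂ, 0 < u.im → DifferentiableAt ℂ (coneMap γ ω z ξ) u) ∧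
    Set.InjOn (coneMap γ ω z ξ) {u : ℂ | 0 < u.im} ∧
    coneMap γ ω z ξ (Complex.I * ((ξ ^ (1 / γ) : ℝ) : ℂ)) = z ∧
    coneMap γ ω z ξ '' {u : ℂ | 0 < u.im}
      = interior ((fun ζ : ℂ =>
          -Complex.I * Complex.exp (Complex.I * (ω : ℂ)) * (ξ : ℂ) + ζ) ''
            coneSet γ ω z) := by
  have hrot : Complex.exp (-Complex.I * (ω:ℂ)) * Complex.exp (Complex.I * (ω:ℂ)) = 1 := by
    rw [← Complex.exp_add]; ring_nf; exact Complex.exp_zero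
  have habsω : ‖Complex.exp (Complex.I * (ω:ℂ))‖ = 1 := by
    rw [Complex.norm_exp]
    simp [Complex.mul_re]
  have habsω' : ‖Complex.exp (-Complex.I * (ω:ℂ))‖ = 1 := by
    rw [Complex.norm_exp]
    simp [Complex.mul_re]
  refine ⟨?_, ?_, ?_, ?_, ?_⟩
  · -- continuity
    unfold coneMap
    exact continuousOn_const.add (continuousOn_const.mul (continuousOn_const.add
      (continuousOn_const.mul (branchPow_continuousOn hγ))))
  · -- differentiability
    intro u hu
    unfold coneMap
    exact (differentiableAt_const _).add ((differentiableAt_const _).mul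
      ((differentiableAt_const _).add ((differentiableAt_const _).mul
        (branchPow_differentiableAt hu))))
  · -- injectivity
    intro u hu v hv huv
    have hu' : (0:ℝ) < u.im := hu
    have hv' : (0:ℝ) < v.im := hv
    have hu0 : u ≠ 0 := fun h0 => by simp [h0] at hu'
    have hv0 : v ≠ 0 := fun h0 => by simp [h0] at hv'
    unfold coneMap at huv
    rw [branchPow_eq hu0 hu'.le, branchPow_eq hv0 hv'.le] at huv
    have h1 : Complex.exp ((γ:ℂ) * Complex.log u) = Complex.exp ((γ:ℂ) * Complex.log v) := by
      have hexpω : Complex.exp (Complex.I * (ω:ℂ)) ≠ 0 := Complex.exp_ne_zero _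
      have hexpc : Complex.exp (Complex.I * ((Real.pi * (1 - γ) / 2 : ℝ):ℂ)) ≠ 0 :=
        Complex.exp_ne_zero _
      have h2 := add_left_cancel huv
      have h3 := mul_left_cancel₀ hexpω h2
      have h4 := add_left_cancel h3
      exact mul_left_cancel₀ hexpc h4
    exact expγlog_inj hγ hγ4 hu' hv' h1
  · -- point evaluation
    set t : ℝ := ξ ^ (1/γ) with htdef
    have htpos : 0 < t := Real.rpow_pos_of_pos hξ _
    have ht0 : (t:ℂ) ≠ 0 := by exact_mod_cast htpos.ne'
    have hu0 : Complex.I * (t:ℂ) ≠ 0 := mul_ne_zero Complex.I_ne_zero ht0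
    have hbl : branchLog (Complex.I * (t:ℂ))
        = ((Real.log t : ℝ):ℂ) + ((Real.pi/2 : ℝ):ℂ) * Complex.I := by
      rw [branchLog]
      have h1 : -Complex.I * (Complex.I * (t:ℂ)) = (t:ℂ) := by
        rw [← mul_assoc]
        simp [Complex.I_mul_I]
      rw [h1, ← Complex.ofReal_log htpos.le]
    have hbp : branchPow γ (Complex.I * (t:ℂ))
        = ((ξ:ℝ):ℂ) * Complex.exp (((Real.pi * γ / 2 : ℝ):ℂ) * Complex.I) := by
      rw [branchPow, if_neg hu0, hbl]
      have h2 : (γ:ℂ) * (((Real.log t : ℝ):ℂ) + ((Real.pi/2 : ℝ):ℂ) * Complex.I)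
          = ((γ * Real.log t : ℝ):ℂ) + ((Real.pi * γ / 2 : ℝ):ℂ) * Complex.I := by
        push_cast; ring
      rw [h2, Complex.exp_add]
      congr 1
      rw [← Complex.ofReal_exp]
      congr 1
      have e1 : Real.exp (γ * Real.log t) = t ^ γ := by
        rw [Real.rpow_def_of_pos htpos, mul_comm]
      rw [e1, htdef, ← Real.rpow_mul hξ.le, one_div, inv_mul_cancel₀ hγ.ne', Real.rpow_one]
    unfold coneMap
    rw [hbp]
    have h3 : Complex.exp (Complex.I * ((Real.pi * (1 - γ) / 2 : ℝ):ℂ)) *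
        (((ξ:ℝ):ℂ) * Complex.exp (((Real.pi * γ / 2 : ℝ):ℂ) * Complex.I))
        = (ξ:ℂ) * Complex.exp (((Real.pi/2 : ℝ):ℂ) * Complex.I) := by
      rw [mul_comm (Complex.exp _) _, mul_assoc, ← Complex.exp_add]
      congr 2
      push_cast; ring
    rw [h3]
    have h4 : Complex.exp (((Real.pi/2 : ℝ):ℂ) * Complex.I) = Complex.I := by
      rw [Complex.exp_mul_I]
      push_cast
      rw [Complex.cos_pi_div_two, Complex.sin_pi_div_two]
      ring
    rw [h4]
    ring
  · -- image
    set a : ℂ := -Complex.I * Complex.exp (Complex.I * (ω:ℂ)) * (ξ:ℂ) with ha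
    rw [interior_translate a (coneSet γ ω z), interior_coneSet hγ hγ4 ω z]
    ext w
    simp only [Set.mem_image, Set.mem_setOf_eq]
    constructor
    · rintro ⟨u, hu, rfl⟩
      have hu' : (0:ℝ) < u.im := hu
      have hu0 : u ≠ 0 := fun h0 => by simp [h0] at hu'
      set s : ℂ := Complex.exp (Complex.I * ((Real.pi * (1 - γ) / 2 : ℝ):ℂ)) *
        Complex.exp ((γ:ℂ) * Complex.log u) with hs
      refine ⟨z + Complex.exp (Complex.I * (ω:ℂ)) * s, ?_, ?_⟩
      · have habs : ‖z + Complex.exp (Complex.I * (ω:ℂ)) * s - z‖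
            = ‖s‖ := by
          have : z + Complex.exp (Complex.I * (ω:ℂ)) * s - z
              = Complex.exp (Complex.I * (ω:ℂ)) * s := by ring
          rw [this, norm_mul, habsω, one_mul]
        have him : (Complex.exp (-Complex.I * (ω:ℂ)) *
            (z + Complex.exp (Complex.I * (ω:ℂ)) * s - z)).im = s.im := by
          have h5 : Complex.exp (-Complex.I * (ω:ℂ)) *
              (z + Complex.exp (Complex.I * (ω:ℂ)) * s - z) = s := by
            have : z + Complex.exp (Complex.I * (ω:ℂ)) * s - z
                = Complex.exp (Complex.I * (ω:ℂ)) * s := by ring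
            rw [this, ← mul_assoc, hrot, one_mul]
          rw [h5]
        rw [habs, him]
        exact sector_forward hγ hγ4 hu'
      · rw [coneMap, branchPow_eq hu0 hu'.le, ← hs, ha]
        ring
    · rintro ⟨ζ, hζ, rfl⟩
      set s : ℂ := Complex.exp (-Complex.I * (ω:ℂ)) * (ζ - z) with hs
      have habs : ‖s‖ = ‖ζ - z‖ := by
        rw [hs, norm_mul, habsω', one_mul]
      have hcond : Real.cos (Real.pi * γ / 2) * ‖s‖ < s.im := by
        rw [habs]
        exact hζ
      obtain ⟨u, hu, hueq⟩ := sector_backward hγ hγ4 hcond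
      have hu0 : u ≠ 0 := fun h0 => by simp [h0] at hu
      refine ⟨u, hu, ?_⟩
      rw [coneMap, branchPow_eq hu0 hu.le, hueq, hs]
      have h6 : Complex.exp (Complex.I * (ω:ℂ)) *
          (Complex.exp (-Complex.I * (ω:ℂ)) * (ζ - z)) = ζ - z := by
        rw [← mul_assoc, mul_comm (Complex.exp (Complex.I * (ω:ℂ))), hrot, one_mul]
      rw [mul_add, h6, ha]
      ring
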